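/- arXiv:0811.0803 — 4 statements merged into one kernel-verified Lean document; each statement's English description precedes it below -/
import Mathlib

section
/- Let f, g : (A, α) → (B, β) be a reflexive pair of T-algebra morphisms (there is a T-algebra morphism h : (B, β) → (A, α) with f ∘ h = id and g ∘ h = id), and suppose the underlying pair has a coequalizer q : B → C in C. Then there is a unique T-algebra structure γ : T C → C such that q is a T-algebra morphism from (B, β) to (C, γ), and ((C, γ), q) is a coequalizer of (f, g) in the category Alg T of T-algebras. Equivalently, the forgetful functor Alg T ⥤ C creates coequalizers of reflexive pairs. -/
open CategoryTheory CategoryTheory.Limits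

universe v₁ u₁

/-- Let `T` be a monad on `C` preserving reflexive coequalizers, let
`f, g : (A, α) ⟶ (B, β)` be a reflexive pair of `T`-algebra morphisms (with common section `h`),
and let `c` be a coequalizer of the underlying pair `f.f, g.f` in `C`.  Then there is a unique
`T`-algebra structure `γ` on the coequalizer object making the projection `π` a `T`-algebra
morphism from `(B, β)`, and the resulting cofork is a coequalizer of `(f, g)` in the category
of `T`-algebras; i.e. the forgetful functor creates coequalizers of reflexive pairs. -/
theorem forget_creates_reflexive_coequalizers
    {C : Type u₁} [Category.{v₁} C] (T : Monad C)
    (hT : ∀ ⦃X Y : C⦄ (p q : X ⟶ Y), IsReflexivePair p q →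
      Nonempty (PreservesColimit (parallelPair p q) (T : C ⥤ C)))
    {A B : Monad.Algebra T} (f g : A ⟶ B) (h : B ⟶ A)
    (hf : h ≫ f = 𝟙 B) (hg : h ≫ g = 𝟙 B)
    (c : Cofork f.f g.f) (hc : IsColimit c) :
    ∃ γ : (T : C ⥤ C).obj c.pt ⟶ c.pt,
      ∃ (hγu : T.η.app c.pt ≫ γ = 𝟙 c.pt)
        (hγa : T.μ.app c.pt ≫ γ = (T : C ⥤ C).map γ ≫ γ)
        (hπ : (T : C ⥤ C).map c.π ≫ γ = B.a ≫ c.π),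
        (∀ γ' : (T : C ⥤ C).obj c.pt ⟶ c.pt,
          T.η.app c.pt ≫ γ' = 𝟙 c.pt →
          T.μ.app c.pt ≫ γ' = (T : C ⥤ C).map γ' ≫ γ' →
          (T : C ⥤ C).map c.π ≫ γ' = B.a ≫ c.π → γ' = γ) ∧
        Nonempty (IsColimit (Cofork.ofπ
          (Monad.Algebra.Hom.mk c.π hπ : B ⟶ Monad.Algebra.mk c.pt γ hγu hγa)
          (by apply Monad.Algebra.Hom.ext; simpa using c.condition : f ≫ _ = g ≫ _))) := by
  have hff : h.f ≫ f.f = 𝟙 B.A := congrArg Monad.Algebra.Hom.f hf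
  have hgf : h.f ≫ g.f = 𝟙 B.A := congrArg Monad.Algebra.Hom.f hg
  have refl1 : IsReflexivePair f.f g.f := ⟨⟨h.f, hff, hgf⟩⟩
  haveI p1 : PreservesColimit (parallelPair f.f g.f) (T : C ⥤ C) := (hT _ _ refl1).some
  have refl2 : IsReflexivePair ((T : C ⥤ C).map f.f) ((T : C ⥤ C).map g.f) :=
    ⟨⟨(T : C ⥤ C).map h.f, by rw [← (T : C ⥤ C).map_comp, hff, (T : C ⥤ C).map_id],
      by rw [← (T : C ⥤ C).map_comp, hgf, (T : C ⥤ C).map_id]⟩⟩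
  haveI p2 : PreservesColimit
      (parallelPair ((T : C ⥤ C).map f.f) ((T : C ⥤ C).map g.f)) (T : C ⥤ C) :=
    (hT _ _ refl2).some
  have hc' : IsColimit (Cofork.ofπ c.π c.condition) :=
    hc.ofIsoColimit (Cofork.ext (Iso.refl _) (by simp))
  have tc : IsColimit (Cofork.ofπ ((T : C ⥤ C).map c.π)
      (by simp only [← Functor.map_comp, c.condition]) :
      Cofork ((T : C ⥤ C).map f.f) ((T : C ⥤ C).map g.f)) :=
    isColimitCoforkMapOfIsColimit _ _ hc'
  have ttc : IsColimit (Cofork.ofπ ((T : C ⥤ C).map ((T : C ⥤ C).map c.π))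
      (by simp only [← Functor.map_comp, c.condition]) :
      Cofork ((T : C ⥤ C).map ((T : C ⥤ C).map f.f))
        ((T : C ⥤ C).map ((T : C ⥤ C).map g.f))) :=
    isColimitCoforkMapOfIsColimit _ _ tc
  have w : (T : C ⥤ C).map f.f ≫ B.a ≫ c.π = (T : C ⥤ C).map g.f ≫ B.a ≫ c.π := by
    rw [← Category.assoc, f.h, ← Category.assoc, g.h, Category.assoc, Category.assoc,
      c.condition]
  obtain ⟨γ, hπ⟩ : ∃ γ : (T : C ⥤ C).obj c.pt ⟶ c.pt,
      (T : C ⥤ C).map c.π ≫ γ = B.a ≫ c.π :=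
    ⟨_, Cofork.IsColimit.π_desc' tc _ w⟩
  have hη := T.η.naturality c.π
  simp only [Functor.id_map, Functor.const_obj_obj, parallelPair_obj_one] at hη
  have hμ := T.μ.naturality c.π
  simp only [Functor.comp_map, Functor.const_obj_obj, parallelPair_obj_one] at hμ
  have hγu : T.η.app c.pt ≫ γ = 𝟙 c.pt := by
    apply Cofork.IsColimit.hom_ext hc'
    simp only [Cofork.π_ofπ, Functor.const_obj_obj, parallelPair_obj_one]
    rw [show c.π ≫ 𝟙 c.pt = c.π from Category.comp_id c.π, ← Category.assoc, hη, Category.assoc, hπ, ← Category.assoc,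
      B.unit, Category.id_comp]
  have hγa : T.μ.app c.pt ≫ γ = (T : C ⥤ C).map γ ≫ γ := by
    apply Cofork.IsColimit.hom_ext ttc
    simp only [Cofork.π_ofπ, Functor.const_obj_obj, parallelPair_obj_one]
    rw [← Category.assoc, hμ, Category.assoc, hπ, ← Functor.map_comp_assoc, hπ,
      Functor.map_comp_assoc, hπ, ← Category.assoc, ← Category.assoc, B.assoc]
  have hdesc : ∀ s : Cofork f g, ∃ d : c.pt ⟶ s.pt.A,
      c.π ≫ d = s.π.f ∧ (T : C ⥤ C).map d ≫ s.pt.a = γ ≫ d := by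
    intro s
    obtain ⟨d, hd⟩ : ∃ d : c.pt ⟶ s.pt.A, c.π ≫ d = s.π.f :=
      ⟨_, Cofork.IsColimit.π_desc' hc' s.π.f (congrArg Monad.Algebra.Hom.f s.condition)⟩
    refine ⟨d, hd, ?_⟩
    have hsh := s.π.h
    apply Cofork.IsColimit.hom_ext tc
    simp only [Cofork.π_ofπ, Functor.const_obj_obj, parallelPair_obj_one]
    have h2 : (T : C ⥤ C).map c.π ≫ γ ≫ d = B.a ≫ c.π ≫ d := by
      rw [← Category.assoc, hπ, Category.assoc]
    rw [← Category.assoc, ← Functor.map_comp, hd, hsh, h2, hd]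
  choose d hd1 hd2 using hdesc
  have uniq : ∀ γ' : (T : C ⥤ C).obj c.pt ⟶ c.pt,
      T.η.app c.pt ≫ γ' = 𝟙 c.pt →
      T.μ.app c.pt ≫ γ' = (T : C ⥤ C).map γ' ≫ γ' →
      (T : C ⥤ C).map c.π ≫ γ' = B.a ≫ c.π → γ' = γ := by
    intro γ' _ _ hπ'
    apply Cofork.IsColimit.hom_ext tc
    simp only [Cofork.π_ofπ, Functor.const_obj_obj, parallelPair_obj_one]
    rw [hπ', hπ]
  refine ⟨γ, hγu, hγa, hπ, uniq, ⟨?_⟩⟩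
  refine Cofork.IsColimit.mk _ (fun s => ⟨d s, hd2 s⟩)
    (fun s => Monad.Algebra.Hom.ext ?_) (fun s m hm => Monad.Algebra.Hom.ext ?_)
  · simpa using hd1 s
  · apply Cofork.IsColimit.hom_ext hc'
    have hmf := congrArg Monad.Algebra.Hom.f hm
    simp only [Cofork.π_ofπ, Monad.Algebra.comp_f] at hmf ⊢
    rw [hmf, hd1 s]
end

section
/- If C is cocomplete and T is a monad on C that preserves reflexive coequalizers, then the category Alg T of T-algebras is cocomplete (has all small colimits). -/
open CategoryTheory CategoryTheory.Limits

universe v₁ u₁ u₂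

/-!
Since `T` preserves reflexive coequalizers, the forgetful functor `Alg T ⥤ C` creates them, so
postcomposition with it, `(J ⥤ Alg T) ⥤ (J ⥤ C)`, is monadic by the reflexive monadicity theorem.
The adjoint lifting theorem, applied to the square formed by this functor, the forgetful functor
and the two constant-diagram functors, lifts the left adjoint `colim` of `C ⥤ (J ⥤ C)` to a left
adjoint of `Alg T ⥤ (J ⥤ Alg T)`.
-/

namespace CategoryTheory.Monad

open WalkingParallelPair

section

variable {C : Type u₁} [Category.{v₁} C] {D : Type u₂} [Category.{v₁} D]

theorem preservesColimitOfIsReflexivePair_iff_preservesColimitsOfShape (G : C ⥤ D) :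
    PreservesColimitOfIsReflexivePair G ↔ PreservesColimitsOfShape WalkingReflexivePair G := by
  constructor
  · intro _
    refine ⟨fun {K} => ?_⟩
    have : PreservesColimit (inclusionWalkingReflexivePair ⋙ K) G :=
      preservesColimit_of_iso_diagram G (K₁ := parallelPair (K.map .left) (K.map .right))
        (diagramIsoParallelPair (inclusionWalkingReflexivePair ⋙ K)).symm
    exact Functor.Final.preservesColimit_of_comp inclusionWalkingReflexivePair
  · intro _
    exact ⟨fun _ _ f g _ => preservesColimit_of_iso_diagram G
      (inclusionWalkingReflexivePairOfIsReflexivePairIso f g)⟩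

end

variable {C : Type u₁} [Category.{v₁} C] (T : Monad C)
  [HasColimitsOfShape WalkingReflexivePair C]
  [PreservesColimitsOfShape WalkingReflexivePair (T : C ⥤ C)]

instance hasColimitsOfShape_walkingReflexivePair_algebra :
    HasColimitsOfShape WalkingReflexivePair (Algebra T) :=
  hasColimitsOfShape_of_hasColimitsOfShape_createsColimitsOfShape (forget T)

noncomputable instance monadicRightAdjointWhiskeringRightForget (J : Type*) [Category* J] :
    MonadicRightAdjoint ((Functor.whiskeringRight J (Algebra T) C).obj (forget T)) :=
  have : HasReflexiveCoequalizers (J ⥤ Algebra T) := hasReflexiveCoequalizers_iff.1 inferInstance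
  have := (preservesColimitOfIsReflexivePair_iff_preservesColimitsOfShape
    ((Functor.whiskeringRight J (Algebra T) C).obj (forget T))).2 inferInstance
  monadicOfHasPreservesReflexiveCoequalizersOfReflectsIsomorphisms (T.adj.whiskerRight J)

theorem hasColimitsOfShape_algebra (J : Type*) [Category* J] [HasColimitsOfShape J C] :
    HasColimitsOfShape J (Algebra T) := by
  have : HasReflexiveCoequalizers (Algebra T) := hasReflexiveCoequalizers_iff.1 inferInstance
  have := hasColimitsOfShape_iff_isRightAdjoint_const.1 ‹HasColimitsOfShape J C›
  rw [hasColimitsOfShape_iff_isRightAdjoint_const]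
  exact isRightAdjoint_square_lift_monadic _ _ (forget T) _ (Functor.compConstIso J (forget T))

end CategoryTheory.Monad

/-- If `C` is cocomplete and `T` is a monad on `C` preserving reflexive
coequalizers, then the category of `T`-algebras is cocomplete. -/
theorem algebra_cocomplete_of_preserves_reflexive_coequalizers
    {C : Type u₁} [Category.{v₁} C] [HasColimits C] (T : Monad C)
    (hT : ∀ ⦃X Y : C⦄ (p q : X ⟶ Y), IsReflexivePair p q →
      Nonempty (PreservesColimit (parallelPair p q) (T : C ⥤ C))) :
    HasColimits (Monad.Algebra T) := by
  have := (Monad.preservesColimitOfIsReflexivePair_iff_preservesColimitsOfShape (T : C ⥤ C)).1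
    ⟨fun _ _ p q h => (hT p q h).some⟩
  exact ⟨fun J _ => T.hasColimitsOfShape_algebra J⟩
end

section
/- Let R : J ⥤ Alg T be a small diagram of T-algebras, with underlying diagram U ∘ R in C and action maps ξ_j : T(U R_j) → U R_j. Let c : colim_J T(U R_j) → colim_J U R_j be the map induced by the ξ_j, and let α : colim_J T(U R_j) → T(colim_J U R_j) be the canonical comparison map (induced by applying T to the colimit cocone of U ∘ R). Then the pair of T-algebra morphisms Free_T(c) and (μ_T)_{colim U R} ∘ T(α) from Free_T(colim_J T(U R_j)) to Free_T(colim_J U R_j) is a reflexive pair (split by Free_T applied to the map induced by the units (η_T)_{U R_j}), and its coequalizer in Alg T is a colimit of the diagram R. -/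
open CategoryTheory CategoryTheory.Limits

universe v₁ u₁

variable {C : Type u₁} [Category.{v₁} C] [HasColimits C]
variable {J : Type v₁} [SmallCategory J]

namespace MonadColim

variable (T : Monad C) (R : J ⥤ Monad.Algebra T)

/-- The underlying diagram in `C` of a diagram of `T`-algebras. -/
abbrev UR : J ⥤ C := R ⋙ T.forget

/-- The natural transformation `T(U R_j) ⟶ U R_j` given by the action maps `ξ_j`. -/
def xi : UR T R ⋙ (T : C ⥤ C) ⟶ UR T R where
  app j := (R.obj j).a
  naturality _ _ u := (R.map u).h

/-- The map `colim_J T(U R_j) ⟶ colim_J U R_j` induced by the action maps. -/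
noncomputable def cmap : colimit (UR T R ⋙ (T : C ⥤ C)) ⟶ colimit (UR T R) := colimMap (xi T R)

/-- The canonical comparison map `colim_J T(U R_j) ⟶ T(colim_J U R_j)`. -/
noncomputable def alpha : colimit (UR T R ⋙ (T : C ⥤ C)) ⟶ (T : C ⥤ C).obj (colimit (UR T R)) :=
  colimit.post (UR T R) (T : C ⥤ C)

/-- The first map of the reflexive pair: `Free_T` applied to the map induced by the actions. -/
noncomputable def first : (Monad.free T).obj (colimit (UR T R ⋙ (T : C ⥤ C))) ⟶
    (Monad.free T).obj (colimit (UR T R)) :=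
  (Monad.free T).map (cmap T R)

/-- The second map of the reflexive pair: the `T`-algebra morphism of free algebras with
underlying map `(μ_T)_{colim U R} ∘ T(α)`. -/
noncomputable def second : (Monad.free T).obj (colimit (UR T R ⋙ (T : C ⥤ C))) ⟶
    (Monad.free T).obj (colimit (UR T R)) where
  f := (T : C ⥤ C).map (alpha T R) ≫ T.μ.app (colimit (UR T R))
  h := by
    change T.map (T.map (alpha T R) ≫ T.μ.app (colimit (UR T R))) ≫ T.μ.app (colimit (UR T R)) =
      T.μ.app (colimit (UR T R ⋙ (T : C ⥤ C))) ≫ T.map (alpha T R) ≫ T.μ.app (colimit (UR T R))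
    rw [Functor.map_comp, Category.assoc, T.assoc]
    have hn := T.μ.naturality (alpha T R)
    dsimp at hn
    rw [← Category.assoc, hn, Category.assoc]

/-- The common section: `Free_T` applied to the map induced by the unit components `η_{U R_j}`. -/
noncomputable def sect : (Monad.free T).obj (colimit (UR T R)) ⟶
    (Monad.free T).obj (colimit (UR T R ⋙ (T : C ⥤ C))) :=
  (Monad.free T).map (colimMap
    { app := fun j => T.η.app ((UR T R).obj j)
      naturality := fun _ _ u => T.η.naturality ((UR T R).map u) })

end MonadColim

/-!
An algebra morphism `q : Free_T (colim U R) ⟶ B` is determined by its transpose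
`g = η ≫ q.f : colim U R ⟶ U B`, i.e. by the cocone of maps `ι_j ≫ g : U R_j ⟶ U B`, and `q`
coequalizes the pair exactly when every `ι_j ≫ g` is an algebra morphism `R_j ⟶ B`. So coforks
of the pair are the same as cocones on `R`, and a colimiting cofork gives a colimiting cocone.
The coequalizer exists because the pair is reflexive: `U` creates it, since `T` preserves
reflexive coequalizers.
-/

section

variable {D E : Type*} [Category D] [Category E]

theorem CategoryTheory.IsReflexivePair.map (F : D ⥤ E) {A B : D} (f g : A ⟶ B)
    [IsReflexivePair f g] : IsReflexivePair (F.map f) (F.map g) :=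
  IsReflexivePair.mk' (F.map (commonSection f g))
    (by rw [← F.map_comp, section_comp_left, F.map_id])
    (by rw [← F.map_comp, section_comp_right, F.map_id])

theorem CategoryTheory.Monad.preservesColimit_of_isReflexivePair {T : Monad D}
    (hT : ∀ ⦃X Y : D⦄ (p q : X ⟶ Y), IsReflexivePair p q →
      Nonempty (PreservesColimit (parallelPair p q) (T : D ⥤ D)))
    (K : WalkingParallelPair ⥤ D) (hK : IsReflexivePair (K.map .left) (K.map .right)) :
    PreservesColimit K (T : D ⥤ D) :=
  have := (hT _ _ hK).some
  preservesColimit_of_iso_diagram _ (diagramIsoParallelPair K).symm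

theorem CategoryTheory.Monad.hasCoequalizer_of_isReflexivePair [HasReflexiveCoequalizers D]
    {T : Monad D}
    (hT : ∀ ⦃X Y : D⦄ (p q : X ⟶ Y), IsReflexivePair p q →
      Nonempty (PreservesColimit (parallelPair p q) (T : D ⥤ D)))
    {A B : T.Algebra} (f g : A ⟶ B) [IsReflexivePair f g] : HasCoequalizer f g := by
  let K := parallelPair f g ⋙ T.forget
  have hK : IsReflexivePair (K.map .left) (K.map .right) := IsReflexivePair.map T.forget f g
  have : HasColimit K := hasColimit_of_iso (diagramIsoParallelPair K)
  have := preservesColimit_of_isReflexivePair hT K hK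
  have := preservesColimit_of_isReflexivePair hT (K ⋙ (T : D ⥤ D))
    (IsReflexivePair.map (T.forget ⋙ (T : D ⥤ D)) f g)
  exact hasColimit_of_created (parallelPair f g) T.forget

end

namespace CategoryTheory.Monad

variable {D : Type*} [Category D] (T : Monad D)

-- `(T.free.obj X).A` is `T.obj X` only after unfolding, so composites involving `q.f` for
-- `q : T.free.obj X ⟶ B` often have to be restated with `change` before they can be rewritten.
def freeDesc {X : D} {B : T.Algebra} (g : X ⟶ B.A) : T.free.obj X ⟶ B where
  f := T.map g ≫ B.a
  h := by
    change T.map (T.map g ≫ B.a) ≫ B.a = T.μ.app X ≫ T.map g ≫ B.a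
    rw [Functor.map_comp, Category.assoc, ← B.assoc, ← T.μ.naturality_assoc]
    rfl

theorem unit_comp_freeDesc_f {X : D} {B : T.Algebra} (g : X ⟶ B.A) :
    T.η.app X ≫ (freeDesc T g).f = g := by
  change T.η.app X ≫ T.map g ≫ B.a = g
  rw [← T.η.naturality_assoc, Functor.id_map, B.unit]
  exact Category.comp_id g

theorem free_hom_f_eq {X : D} {B : T.Algebra} (q : T.free.obj X ⟶ B) :
    q.f = T.map (T.η.app X ≫ q.f) ≫ B.a := by
  erw [Functor.map_comp, Category.assoc, q.h, T.right_unit_assoc]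

theorem free_hom_ext {X : D} {B : T.Algebra} {p q : T.free.obj X ⟶ B}
    (h : T.η.app X ≫ p.f = T.η.app X ≫ q.f) : p = q := by
  ext
  rw [free_hom_f_eq T p, free_hom_f_eq T q, h]

theorem free_hom_ext_iff {X : D} {B : T.Algebra} {p q : T.free.obj X ⟶ B} :
    p = q ↔ T.η.app X ≫ p.f = T.η.app X ≫ q.f :=
  ⟨fun h => h ▸ rfl, free_hom_ext T⟩

end CategoryTheory.Monad

namespace MonadColim

variable (T : Monad C) (R : J ⥤ Monad.Algebra T)

noncomputable def unitMap : colimit (UR T R) ⟶ colimit (UR T R ⋙ (T : C ⥤ C)) :=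
  colimMap (Functor.whiskerLeft (UR T R) T.η : UR T R ⟶ UR T R ⋙ (T : C ⥤ C))

theorem sect_eq_free_map_unitMap : sect T R = T.free.map (unitMap T R) := rfl

theorem ι_unitMap (j : J) :
    colimit.ι (UR T R) j ≫ unitMap T R = T.η.app _ ≫ colimit.ι (UR T R ⋙ (T : C ⥤ C)) j :=
  ι_colimMap _ _

theorem ι_cmap (j : J) :
    colimit.ι (UR T R ⋙ (T : C ⥤ C)) j ≫ cmap T R = (xi T R).app j ≫ colimit.ι (UR T R) j :=
  ι_colimMap _ _

theorem ι_alpha (j : J) :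
    colimit.ι (UR T R ⋙ (T : C ⥤ C)) j ≫ alpha T R = (T : C ⥤ C).map (colimit.ι (UR T R) j) :=
  colimit.ι_post _ _ _

theorem unitMap_comp_cmap : unitMap T R ≫ cmap T R = 𝟙 _ := by
  ext j
  rw [reassoc_of% ι_unitMap T R j, ι_cmap, Category.comp_id]
  exact (R.obj j).unit_assoc _

theorem unitMap_comp_alpha : unitMap T R ≫ alpha T R = T.η.app (colimit (UR T R)) := by
  ext j
  rw [reassoc_of% ι_unitMap T R j, ι_alpha]
  exact (T.η.naturality _).symm

theorem sect_comp_first : sect T R ≫ first T R = 𝟙 _ := by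
  rw [sect_eq_free_map_unitMap, first, ← Functor.map_comp, unitMap_comp_cmap, T.free.map_id]

theorem unit_comp_second_f :
    T.η.app _ ≫ (second T R).f = alpha T R := by
  change T.η.app _ ≫ (T : C ⥤ C).map (alpha T R) ≫ T.μ.app _ = _
  rw [← T.η.naturality_assoc, Functor.id_map, T.left_unit]
  exact Category.comp_id _

theorem sect_comp_second : sect T R ≫ second T R = 𝟙 _ := by
  apply Monad.free_hom_ext
  change T.η.app _ ≫ (T : C ⥤ C).map (unitMap T R) ≫ (second T R).f = T.η.app _ ≫ 𝟙 _
  refine (T.η.naturality_assoc (unitMap T R) (second T R).f).symm.trans ?_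
  rw [Functor.id_map, unit_comp_second_f, Category.comp_id]
  exact unitMap_comp_alpha T R

theorem cmap_comp_eq_alpha_comp_iff {B : T.Algebra} (g : colimit (UR T R) ⟶ B.A) :
    cmap T R ≫ g = alpha T R ≫ (T : C ⥤ C).map g ≫ B.a ↔
      ∀ j, (T : C ⥤ C).map (colimit.ι (UR T R) j ≫ g) ≫ B.a =
        (xi T R).app j ≫ colimit.ι (UR T R) j ≫ g := by
  rw [eq_comm, colimit.hom_ext_iff]
  simp only [reassoc_of% ι_cmap T R, reassoc_of% ι_alpha T R, Functor.map_comp, Category.assoc]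

theorem first_comp_eq_second_comp_iff {B : T.Algebra} (q : T.free.obj (colimit (UR T R)) ⟶ B) :
    first T R ≫ q = second T R ≫ q ↔
      ∀ j, (T : C ⥤ C).map (colimit.ι (UR T R) j ≫ T.η.app _ ≫ q.f) ≫ B.a =
        (xi T R).app j ≫ colimit.ι (UR T R) j ≫ T.η.app _ ≫ q.f := by
  have hfirst : T.η.app _ ≫ (first T R ≫ q).f = cmap T R ≫ T.η.app _ ≫ q.f :=
    (T.η.naturality_assoc (cmap T R) q.f).symm
  have hsecond : T.η.app _ ≫ (second T R ≫ q).f =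
      alpha T R ≫ (T : C ⥤ C).map (T.η.app _ ≫ q.f) ≫ B.a := by
    rw [← Monad.free_hom_f_eq]
    exact (Category.assoc _ _ _).symm.trans (congrArg (· ≫ q.f) (unit_comp_second_f T R))
  rw [Monad.free_hom_ext_iff, hfirst, hsecond]
  exact cmap_comp_eq_alpha_comp_iff T R _

noncomputable def coconeOfCoequalizes {B : T.Algebra} (q : T.free.obj (colimit (UR T R)) ⟶ B)
    (hq : first T R ≫ q = second T R ≫ q) : Cocone R where
  pt := B
  ι.app j :=
    { f := colimit.ι (UR T R) j ≫ T.η.app _ ≫ q.f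
      h := (first_comp_eq_second_comp_iff T R q).1 hq j }
  ι.naturality j j' u := by
    ext
    simp only [Monad.Algebra.comp_f, Functor.const_obj_map, Monad.Algebra.id_f]
    exact (colimit.w_assoc (UR T R) u _).trans (Category.comp_id _).symm

noncomputable def descOfCocone (s : Cocone R) : T.free.obj (colimit (UR T R)) ⟶ s.pt :=
  Monad.freeDesc T (colimit.desc (UR T R) (T.forget.mapCocone s))

theorem ι_unit_comp_descOfCocone_f (s : Cocone R) (j : J) :
    colimit.ι (UR T R) j ≫ T.η.app _ ≫ (descOfCocone T R s).f = (s.ι.app j).f :=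
  (congrArg (colimit.ι (UR T R) j ≫ ·) (Monad.unit_comp_freeDesc_f T _)).trans
    (colimit.ι_desc _ _)

theorem first_comp_descOfCocone (s : Cocone R) :
    first T R ≫ descOfCocone T R s = second T R ≫ descOfCocone T R s :=
  (first_comp_eq_second_comp_iff T R _).2 fun j => by
    rw [ι_unit_comp_descOfCocone_f]
    exact (s.ι.app j).h

theorem coconeOfCoequalizes_comp_eq_iff {B : T.Algebra} (q : T.free.obj (colimit (UR T R)) ⟶ B)
    (hq : first T R ≫ q = second T R ≫ q) (s : Cocone R) (d : B ⟶ s.pt) :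
    (∀ j, (coconeOfCoequalizes T R q hq).ι.app j ≫ d = s.ι.app j) ↔
      q ≫ d = descOfCocone T R s := by
  rw [Monad.free_hom_ext_iff, colimit.hom_ext_iff]
  refine forall_congr' fun j => ?_
  have hleg : ((coconeOfCoequalizes T R q hq).ι.app j ≫ d).f =
      colimit.ι (UR T R) j ≫ T.η.app _ ≫ (q ≫ d).f :=
    (Category.assoc _ _ _).trans (congrArg (colimit.ι (UR T R) j ≫ ·) (Category.assoc _ _ _))
  rw [Monad.Algebra.Hom.ext_iff, hleg, ← ι_unit_comp_descOfCocone_f T R s j]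
  rfl

noncomputable def isColimitCoconeOfCoequalizes (cf : Cofork (first T R) (second T R))
    (hc : IsColimit cf) : IsColimit (coconeOfCoequalizes T R cf.π cf.condition) where
  desc s := Cofork.IsColimit.desc hc (descOfCocone T R s) (first_comp_descOfCocone T R s)
  fac s := (coconeOfCoequalizes_comp_eq_iff T R _ _ s _).2 (Cofork.IsColimit.π_desc' hc _ _)
  uniq s m hm := Cofork.IsColimit.hom_ext hc <|
    ((coconeOfCoequalizes_comp_eq_iff T R _ _ s m).1 hm).trans
      (Cofork.IsColimit.π_desc' hc _ _).symm

end MonadColim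

open MonadColim in
/-- For a small diagram `R` of `T`-algebras (`T` a monad preserving reflexive
coequalizers on a cocomplete category), the pair of free-algebra morphisms `Free_T(c)` and
`μ ∘ T(α)` is a reflexive pair, split by `Free_T` of the map induced by the units, and any
coequalizer of this pair in the category of `T`-algebras is a colimit of `R`. -/
theorem colimit_as_reflexive_coequalizer
    (T : Monad C)
    (hT : ∀ ⦃X Y : C⦄ (p q : X ⟶ Y), IsReflexivePair p q →
      Nonempty (PreservesColimit (parallelPair p q) (T : C ⥤ C)))
    (R : J ⥤ Monad.Algebra T) :
    (sect T R ≫ first T R = 𝟙 _ ∧ sect T R ≫ second T R = 𝟙 _) ∧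
    HasCoequalizer (first T R) (second T R) ∧
    (∀ (cf : Cofork (first T R) (second T R)), IsColimit cf →
      ∃ t : Cocone R, t.pt = cf.pt ∧ Nonempty (IsColimit t)) := by
  have : IsReflexivePair (first T R) (second T R) :=
    IsReflexivePair.mk' _ (sect_comp_first T R) (sect_comp_second T R)
  refine ⟨⟨sect_comp_first T R, sect_comp_second T R⟩,
    Monad.hasCoequalizer_of_isReflexivePair hT _ _, fun cf hc => ?_⟩
  exact ⟨coconeOfCoequalizes T R cf.π cf.condition, rfl,
    ⟨isColimitCoconeOfCoequalizes T R cf hc⟩⟩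
end

section
/- Suppose in addition that C and D are cocomplete, that T and S preserve reflexive coequalizers, that F preserves all small colimits, and that F is a left adjoint (admits a right adjoint). Then the lifted functor F̄ : Alg T ⥤ Alg S (sending (X, ψ) to (F X, F(ψ) ∘ φ_X)) is a left adjoint. -/
open CategoryTheory CategoryTheory.Limits

universe v₁ v₂ u₁ u₂

variable {C : Type u₁} [Category.{v₁} C] {D : Type u₂} [Category.{v₁} D]

/-- The lifted functor `F̄ : Alg T ⥤ Alg S` induced by a functor `F : C ⥤ D` together with a
natural isomorphism `φ_X : S(F X) ≅ F(T X)` compatible with the monad structures; it sends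
`(X, ψ)` to `(F X, F(ψ) ∘ φ_X)` and `f` to `F(f)`. -/
def MonadCompat.lift (T : Monad C) (S : Monad D) (F : C ⥤ D)
    (φ : F ⋙ (S : D ⥤ D) ≅ (T : C ⥤ C) ⋙ F)
    (hη : ∀ X : C, S.η.app (F.obj X) ≫ φ.hom.app X = F.map (T.η.app X))
    (hμ : ∀ X : C, S.μ.app (F.obj X) ≫ φ.hom.app X =
      (S : D ⥤ D).map (φ.hom.app X) ≫ φ.hom.app ((T : C ⥤ C).obj X) ≫ F.map (T.μ.app X)) :
    Monad.Algebra T ⥤ Monad.Algebra S where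
  obj A :=
    { A := F.obj A.A
      a := φ.hom.app A.A ≫ F.map A.a
      unit := by
        rw [← Category.assoc, hη, ← F.map_comp, A.unit]
        simp
      assoc := by
        have nat := φ.hom.naturality A.a
        simp only [Functor.comp_map] at nat
        calc S.μ.app (F.obj A.A) ≫ φ.hom.app A.A ≫ F.map A.a
            = (S.μ.app (F.obj A.A) ≫ φ.hom.app A.A) ≫ F.map A.a := by
              rw [Category.assoc]
          _ = ((S : D ⥤ D).map (φ.hom.app A.A) ≫ φ.hom.app ((T : C ⥤ C).obj A.A) ≫
                F.map (T.μ.app A.A)) ≫ F.map A.a := by rw [hμ]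
          _ = (S : D ⥤ D).map (φ.hom.app A.A) ≫ φ.hom.app ((T : C ⥤ C).obj A.A) ≫
                F.map (T.μ.app A.A ≫ A.a) := by
              simp only [Category.assoc, F.map_comp]
          _ = (S : D ⥤ D).map (φ.hom.app A.A) ≫ φ.hom.app ((T : C ⥤ C).obj A.A) ≫
                F.map ((T : C ⥤ C).map A.a ≫ A.a) := by rw [A.assoc]
          _ = (S : D ⥤ D).map (φ.hom.app A.A) ≫ (φ.hom.app ((T : C ⥤ C).obj A.A) ≫
                F.map ((T : C ⥤ C).map A.a)) ≫ F.map A.a := by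
              simp only [Category.assoc, F.map_comp]
          _ = (S : D ⥤ D).map (φ.hom.app A.A) ≫ ((S : D ⥤ D).map (F.map A.a) ≫
                φ.hom.app A.A) ≫ F.map A.a := by rw [nat]
          _ = (S : D ⥤ D).map (φ.hom.app A.A ≫ F.map A.a) ≫ φ.hom.app A.A ≫ F.map A.a := by
              simp only [Category.assoc, Functor.map_comp] }
  map {A B} f :=
    { f := F.map f.f
      h := by
        have nat := φ.hom.naturality f.f
        simp only [Functor.comp_map] at nat
        calc (S : D ⥤ D).map (F.map f.f) ≫ φ.hom.app B.A ≫ F.map B.a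
            = ((S : D ⥤ D).map (F.map f.f) ≫ φ.hom.app B.A) ≫ F.map B.a := by
              rw [Category.assoc]
          _ = φ.hom.app A.A ≫ F.map ((T : C ⥤ C).map f.f) ≫ F.map B.a := by
              rw [nat, Category.assoc]
          _ = φ.hom.app A.A ≫ F.map ((T : C ⥤ C).map f.f ≫ B.a) := by
              rw [F.map_comp]
          _ = φ.hom.app A.A ≫ F.map (A.a ≫ f.f) := by rw [f.h]
          _ = (φ.hom.app A.A ≫ F.map A.a) ≫ F.map f.f := by
              rw [F.map_comp, Category.assoc] }
  map_id A := by
    apply Monad.Algebra.Hom.ext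
    simp
  map_comp f g := by
    apply Monad.Algebra.Hom.ext
    simp

/-!
Doctrinal adjunction: for `F ⊣ G` with counit `ε`, the structure map of `Ḡ B` is the transpose of
`φ⁻¹ ≫ S ε ≫ b : F (T (G B)) ⟶ B`. With this choice a map `u : A ⟶ G B` is a `T`-algebra map
into `Ḡ B` exactly when its transpose `F A ⟶ B` is an `S`-algebra map out of `F̄ A`, so the
hom-bijection of `F ⊣ G` restricts to algebras. The unit and associativity laws of `Ḡ B` come
from the compatibility of `φ` with `η` and `μ`.
-/
namespace MonadCompat

variable {T : Monad C} {S : Monad D} {F : C ⥤ D} {G : D ⥤ C} (adj : F ⊣ G)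
  (φ : F ⋙ (S : D ⥤ D) ≅ (T : C ⥤ C) ⋙ F)

def liftRightStr (B : Monad.Algebra S) : (T : C ⥤ C).obj (G.obj B.A) ⟶ G.obj B.A :=
  adj.homEquiv _ _ (φ.inv.app (G.obj B.A) ≫ (S : D ⥤ D).map (adj.counit.app B.A) ≫ B.a)

lemma map_liftRightStr_comp_counit (B : Monad.Algebra S) :
    F.map (liftRightStr adj φ B) ≫ adj.counit.app B.A =
      φ.inv.app (G.obj B.A) ≫ (S : D ⥤ D).map (adj.counit.app B.A) ≫ B.a := by
  simp [liftRightStr, Adjunction.homEquiv_unit]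

lemma homEquiv_symm_map_comp_liftRightStr {X : C} (B : Monad.Algebra S) (u : X ⟶ G.obj B.A) :
    (adj.homEquiv _ _).symm ((T : C ⥤ C).map u ≫ liftRightStr adj φ B) =
      φ.inv.app X ≫ (S : D ⥤ D).map ((adj.homEquiv _ _).symm u) ≫ B.a := by
  have nat := φ.inv.naturality u
  simp only [Functor.comp_map] at nat
  simp [Adjunction.homEquiv_counit, map_liftRightStr_comp_counit, reassoc_of% nat]

lemma map_comp_liftRightStr_eq_iff {X : C} (x : (T : C ⥤ C).obj X ⟶ X) (B : Monad.Algebra S)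
    (u : X ⟶ G.obj B.A) :
    (T : C ⥤ C).map u ≫ liftRightStr adj φ B = x ≫ u ↔
      (S : D ⥤ D).map ((adj.homEquiv _ _).symm u) ≫ B.a =
        (φ.hom.app X ≫ F.map x) ≫ (adj.homEquiv _ _).symm u := by
  rw [← (adj.homEquiv _ _).symm.injective.eq_iff, homEquiv_symm_map_comp_liftRightStr,
    Adjunction.homEquiv_naturality_left_symm, Category.assoc]
  exact (φ.app X).inv_comp_eq

lemma hom_app_comp_map_mu
    (hμ : ∀ X : C, S.μ.app (F.obj X) ≫ φ.hom.app X =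
      (S : D ⥤ D).map (φ.hom.app X) ≫ φ.hom.app ((T : C ⥤ C).obj X) ≫ F.map (T.μ.app X))
    (X : C) :
    φ.hom.app ((T : C ⥤ C).obj X) ≫ F.map (T.μ.app X) =
      (S : D ⥤ D).map (φ.inv.app X) ≫ S.μ.app (F.obj X) ≫ φ.hom.app X := by
  rw [hμ, ← Functor.map_comp_assoc]
  simp

variable (T S)

def liftRight (hη : ∀ X : C, S.η.app (F.obj X) ≫ φ.hom.app X = F.map (T.η.app X))
    (hμ : ∀ X : C, S.μ.app (F.obj X) ≫ φ.hom.app X =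
      (S : D ⥤ D).map (φ.hom.app X) ≫ φ.hom.app ((T : C ⥤ C).obj X) ≫ F.map (T.μ.app X)) :
    Monad.Algebra S ⥤ Monad.Algebra T where
  obj B :=
    { A := G.obj B.A
      a := liftRightStr adj φ B
      unit := by
        apply (adj.homEquiv _ _).symm.injective
        simp only [Adjunction.homEquiv_counit, Functor.map_comp, ← hη, Category.assoc,
          map_liftRightStr_comp_counit, Iso.hom_inv_id_app_assoc]
        rw [← S.η.naturality_assoc]
        simp [B.unit]
      assoc := by
        refine ((map_comp_liftRightStr_eq_iff adj φ (T.μ.app _) B _).2 ?_).symm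
        simp only [Adjunction.homEquiv_counit, map_liftRightStr_comp_counit, Category.assoc,
          hom_app_comp_map_mu φ hμ, Iso.hom_inv_id_app_assoc]
        rw [← S.μ.naturality_assoc]
        simp [← B.assoc] }
  map {B B'} f :=
    { f := G.map f.f
      h := by
        rw [map_comp_liftRightStr_eq_iff]
        simp [Adjunction.homEquiv_counit, reassoc_of% (map_liftRightStr_comp_counit adj φ B)] }

def liftAdjunction (hη : ∀ X : C, S.η.app (F.obj X) ≫ φ.hom.app X = F.map (T.η.app X))
    (hμ : ∀ X : C, S.μ.app (F.obj X) ≫ φ.hom.app X =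
      (S : D ⥤ D).map (φ.hom.app X) ≫ φ.hom.app ((T : C ⥤ C).obj X) ≫ F.map (T.μ.app X)) :
    lift T S F φ hη hμ ⊣ liftRight T S adj φ hη hμ :=
  Adjunction.mkOfHomEquiv
    { homEquiv A B :=
        { toFun f := ⟨adj.homEquiv _ _ f.f,
            (map_comp_liftRightStr_eq_iff adj φ A.a B _).2
              (by erw [Equiv.symm_apply_apply]; exact f.h)⟩
          invFun g := ⟨(adj.homEquiv _ _).symm g.f,
            (map_comp_liftRightStr_eq_iff adj φ A.a B _).1 g.h⟩
          left_inv f := by ext; exact Equiv.symm_apply_apply _ f.f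
          right_inv g := by ext; exact Equiv.apply_symm_apply _ g.f }
      homEquiv_naturality_left_symm f g := by
        ext
        exact adj.homEquiv_naturality_left_symm f.f g.f
      homEquiv_naturality_right f g := by
        ext
        exact adj.homEquiv_naturality_right f.f g.f }

end MonadCompat

theorem lift_isLeftAdjoint_general
    (T : Monad C) (S : Monad D) (F : C ⥤ D)
    [F.IsLeftAdjoint]
    (φ : F ⋙ (S : D ⥤ D) ≅ (T : C ⥤ C) ⋙ F)
    (hη : ∀ X : C, S.η.app (F.obj X) ≫ φ.hom.app X = F.map (T.η.app X))
    (hμ : ∀ X : C, S.μ.app (F.obj X) ≫ φ.hom.app X =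
      (S : D ⥤ D).map (φ.hom.app X) ≫ φ.hom.app ((T : C ⥤ C).obj X) ≫ F.map (T.μ.app X)) :
    (MonadCompat.lift T S F φ hη hμ).IsLeftAdjoint :=
  (MonadCompat.liftAdjunction T S (Adjunction.ofIsLeftAdjoint F) φ hη hμ).isLeftAdjoint

/-- If moreover `C` and `D` are cocomplete, the monads `T` and `S` preserve
reflexive coequalizers, `F` preserves all small colimits, and `F` is a left adjoint, then the
lifted functor `F̄ : Alg T ⥤ Alg S` is a left adjoint. -/
theorem lift_isLeftAdjoint
    [HasColimits C] [HasColimits D]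
    (T : Monad C) (S : Monad D) (F : C ⥤ D)
    (hT : ∀ ⦃X Y : C⦄ (p q : X ⟶ Y), IsReflexivePair p q →
      Nonempty (PreservesColimit (parallelPair p q) (T : C ⥤ C)))
    (hS : ∀ ⦃X Y : D⦄ (p q : X ⟶ Y), IsReflexivePair p q →
      Nonempty (PreservesColimit (parallelPair p q) (S : D ⥤ D)))
    [PreservesColimits F] [F.IsLeftAdjoint]
    (φ : F ⋙ (S : D ⥤ D) ≅ (T : C ⥤ C) ⋙ F)
    (hη : ∀ X : C, S.η.app (F.obj X) ≫ φ.hom.app X = F.map (T.η.app X))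
    (hμ : ∀ X : C, S.μ.app (F.obj X) ≫ φ.hom.app X =
      (S : D ⥤ D).map (φ.hom.app X) ≫ φ.hom.app ((T : C ⥤ C).obj X) ≫ F.map (T.μ.app X)) :
    (MonadCompat.lift T S F φ hη hμ).IsLeftAdjoint :=
  lift_isLeftAdjoint_general T S F φ hη hμ
end
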